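/- Let 0 ≤ r ≤ r' be real numbers and let X be a finite quasimetric space. If M is an r-minimal model of X and M' is an r'-minimal model of M, then M' is an r'-minimal model of X. (In the notation of the paper: M_{r'}(M_r(X)) ≅ M_{r'}(X) whenever r ≤ r'.) In particular, any short maps that are r-homotopic are also r'-homotopic, and r-homotopy equivalent spaces are r'-homotopy equivalent. -/

import Mathlib

open scoped ENNReal

class QuasiMetric (X : Type*) where
  qdist : X → X → ℝ≥0∞
  qdist_triangle : ∀ x y z : X, qdist x z ≤ qdist x y + qdist y z
  qdist_eq_zero_iff : ∀ x y : X, qdist x y = 0 ↔ x = y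

open QuasiMetric

instance {X : Type*} [QuasiMetric X] (A : Set X) : QuasiMetric A where
  qdist a b := qdist a.1 b.1
  qdist_triangle a b c := qdist_triangle a.1 b.1 c.1
  qdist_eq_zero_iff a b := (qdist_eq_zero_iff a.1 b.1).trans Subtype.coe_inj

/-- A map of quasimetric spaces is short (1-Lipschitz). -/
def IsShort {X Y : Type*} [QuasiMetric X] [QuasiMetric Y] (f : X → Y) : Prop :=
  ∀ x x' : X, qdist (f x) (f x') ≤ qdist x x'

/-- The distance `d(f,g) = sup_x d(f x, g x)` on maps. -/
noncomputable def mapDist {X Y : Type*} [QuasiMetric X] [QuasiMetric Y] (f g : X → Y) : ℝ≥0∞ :=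
  ⨆ x : X, qdist (f x) (g x)

/-- Two short maps are `r`-homotopic if they are connected by a chain of short maps
in which each consecutive pair is at distance `≤ r` in one direction or the other. -/
def MapHomotopic {X Y : Type*} [QuasiMetric X] [QuasiMetric Y] (r : ℝ) (f g : X → Y) : Prop :=
  Relation.ReflTransGen
    (fun u v : X → Y => IsShort u ∧ IsShort v ∧
      (mapDist u v ≤ ENNReal.ofReal r ∨ mapDist v u ≤ ENNReal.ofReal r)) f g

/-- `A ⊆ X` is an `r`-deformation retract of `X`. -/
def IsDefRetract {X : Type*} [QuasiMetric X] (r : ℝ) (A : Set X) : Prop :=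
  ∃ ρ : X → A, IsShort ρ ∧ (∀ a : A, ρ (a : X) = a) ∧
    MapHomotopic r (fun x => (ρ x : X)) id

/-- A quasimetric space is `r`-minimal if it has no proper `r`-deformation retract. -/
def RMinimal (r : ℝ) (X : Type*) [QuasiMetric X] : Prop :=
  ∀ A : Set X, IsDefRetract r A → A = Set.univ

/-- A distance-preserving bijection. -/
def IsIsometry {X Y : Type*} [QuasiMetric X] [QuasiMetric Y] (f : X → Y) : Prop :=
  Function.Bijective f ∧ ∀ x x' : X, qdist (f x) (f x') = qdist x x'

/-- Two quasimetric spaces are `r`-homotopy equivalent. -/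
def RHomotopyEquivalent (r : ℝ) (X Y : Type*) [QuasiMetric X] [QuasiMetric Y] : Prop :=
  ∃ f : X → Y, ∃ g : Y → X, IsShort f ∧ IsShort g ∧
    MapHomotopic r (g ∘ f) id ∧ MapHomotopic r (f ∘ g) id

/-!
An `r`-step between short maps is also an `r'`-step when `r ≤ r'`, so `r`-homotopies and
`r`-homotopy equivalences are `r'`-ones. Pre- and post-composing with short maps does not
increase the sup distance, so homotopy equivalences compose; `M' ≃ M ≃ X` then gives the model.
-/

theorem IsShort.comp {X Y Z : Type*} [QuasiMetric X] [QuasiMetric Y] [QuasiMetric Z]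
    {g : Y → Z} {f : X → Y} (hg : IsShort g) (hf : IsShort f) : IsShort (g ∘ f) :=
  fun x x' => (hg _ _).trans (hf x x')

theorem mapDist_comp_le {X Y Z W : Type*} [QuasiMetric X] [QuasiMetric Y] [QuasiMetric Z]
    [QuasiMetric W] {u v : Y → Z} {h : Z → W} (k : X → Y) (hh : IsShort h) :
    mapDist (h ∘ u ∘ k) (h ∘ v ∘ k) ≤ mapDist u v :=
  iSup_le fun x => (hh _ _).trans (le_iSup (fun y => qdist (u y) (v y)) (k x))

namespace MapHomotopic

variable {X Y : Type*} [QuasiMetric X] [QuasiMetric Y]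

theorem mono {r r' : ℝ} (hrr' : r ≤ r') {f g : X → Y} (hfg : MapHomotopic r f g) :
    MapHomotopic r' f g := by
  refine Relation.ReflTransGen.mono ?_ f g hfg
  rintro u v ⟨hu, hv, hd⟩
  have hle := ENNReal.ofReal_le_ofReal hrr'
  exact ⟨hu, hv, hd.imp (·.trans hle) (·.trans hle)⟩

theorem comp {Z W : Type*} [QuasiMetric Z] [QuasiMetric W] {r : ℝ} {u v : Y → Z}
    {h : Z → W} {k : X → Y} (hh : IsShort h) (hk : IsShort k) (huv : MapHomotopic r u v) :
    MapHomotopic r (h ∘ u ∘ k) (h ∘ v ∘ k) := by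
  induction huv with
  | refl => exact Relation.ReflTransGen.refl
  | tail _ hstep ih =>
    obtain ⟨ha, hb, hd⟩ := hstep
    exact ih.tail ⟨hh.comp (ha.comp hk), hh.comp (hb.comp hk),
      hd.imp (mapDist_comp_le k hh).trans (mapDist_comp_le k hh).trans⟩

end MapHomotopic

namespace RHomotopyEquivalent

variable {X Y Z : Type*} [QuasiMetric X] [QuasiMetric Y] [QuasiMetric Z]

theorem mono {r r' : ℝ} (hrr' : r ≤ r') (h : RHomotopyEquivalent r X Y) :
    RHomotopyEquivalent r' X Y :=
  let ⟨f, g, hf, hg, hgf, hfg⟩ := h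
  ⟨f, g, hf, hg, hgf.mono hrr', hfg.mono hrr'⟩

theorem trans {r : ℝ} (h₁ : RHomotopyEquivalent r X Y) (h₂ : RHomotopyEquivalent r Y Z) :
    RHomotopyEquivalent r X Z := by
  obtain ⟨f₁, g₁, hf₁, hg₁, hgf₁, hfg₁⟩ := h₁
  obtain ⟨f₂, g₂, hf₂, hg₂, hgf₂, hfg₂⟩ := h₂
  refine ⟨f₂ ∘ f₁, g₁ ∘ g₂, hf₂.comp hf₁, hg₁.comp hg₂, ?_, ?_⟩
  · exact (hgf₂.comp hg₁ hf₁).trans hgf₁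
  · exact (hfg₁.comp hf₂ hg₂).trans hfg₂

end RHomotopyEquivalent

theorem stmt_8_general {X M M' Y Z V W : Type*} [QuasiMetric X] [QuasiMetric M] [QuasiMetric M']
    [QuasiMetric Y] [QuasiMetric Z] [QuasiMetric V] [QuasiMetric W]
    (r r' : ℝ) (hrr' : r ≤ r')
    (hM : RMinimal r M ∧ RHomotopyEquivalent r M X)
    (hM' : RMinimal r' M' ∧ RHomotopyEquivalent r' M' M) :
    (RMinimal r' M' ∧ RHomotopyEquivalent r' M' X) ∧
    (∀ f g : Y → Z, IsShort f → IsShort g → MapHomotopic r f g → MapHomotopic r' f g) ∧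
    (RHomotopyEquivalent r V W → RHomotopyEquivalent r' V W) :=
  ⟨⟨hM'.1, hM'.2.trans (hM.2.mono hrr')⟩, fun _ _ _ _ h => h.mono hrr', .mono hrr'⟩

theorem stmt_8 {X M M' Y Z V W : Type*} [QuasiMetric X] [QuasiMetric M] [QuasiMetric M']
    [QuasiMetric Y] [QuasiMetric Z] [QuasiMetric V] [QuasiMetric W]
    [Finite X] [Finite M] [Finite M']
    (r r' : ℝ) (hr : 0 ≤ r) (hrr' : r ≤ r')
    (hM : RMinimal r M ∧ RHomotopyEquivalent r M X)
    (hM' : RMinimal r' M' ∧ RHomotopyEquivalent r' M' M) :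
    (RMinimal r' M' ∧ RHomotopyEquivalent r' M' X) ∧
    (∀ f g : Y → Z, IsShort f → IsShort g → MapHomotopic r f g → MapHomotopic r' f g) ∧
    (RHomotopyEquivalent r V W → RHomotopyEquivalent r' V W) :=
  stmt_8_general r r' hrr' hM hM'
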